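/- The set Λ = {λ > 0 : the system (S_λ) admits a solution} is nonempty, and λ_c := inf Λ satisfies λ_c ≥ 4π·max{N1, N2}/(G(1)·H(1)·|V|) > 0; moreover every λ > λ_c belongs to Λ (so (S_λ) admits a solution for all λ > λ_c) and no λ < λ_c belongs to Λ. -/
import Mathlib


open Real Finset

/-- The μ-Laplacian on a finite weighted graph. -/
noncomputable def graphLap {V : Type*} [Fintype V] (ω : V → V → ℝ) (μ : V → ℝ)
    (f : V → ℝ) (x : V) : ℝ :=
  (1 / μ x) * ∑ y, ω x y * (f y - f x)

/-- The integral of `f` over `V` with respect to the measure `μ`. -/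
noncomputable def graphInt {V : Type*} [Fintype V] (μ : V → ℝ) (f : V → ℝ) : ℝ :=
  ∑ x, μ x * f x

/-- The total volume `|V|` of the graph. -/
noncomputable def graphVol {V : Type*} [Fintype V] (μ : V → ℝ) : ℝ :=
  ∑ x, μ x

/-- The Dirac delta mass at vertex `p`. -/
noncomputable def diracDelta {V : Type*} [DecidableEq V] (μ : V → ℝ) (p x : V) : ℝ :=
  if x = p then 1 / μ p else 0

/-- `primFun F t = ∫_{√t}^{1} 2 s F(s²) ds`; this gives `g` from `G` and `h` from `H`. -/
noncomputable def primFun (F : ℝ → ℝ) (t : ℝ) : ℝ :=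
  ∫ s in Real.sqrt t..(1 : ℝ), 2 * s * F (s ^ 2)

/-- The pointwise squared gradient `|∇ f|²(x)`. -/
noncomputable def gradSq {V : Type*} [Fintype V] (ω : V → V → ℝ) (μ : V → ℝ)
    (f : V → ℝ) (x : V) : ℝ :=
  (1 / (2 * μ x)) * ∑ y, ω x y * (f y - f x) ^ 2

/-- The gradient norm `‖∇ f‖₂ = (∫_V |∇ f|² dμ)^{1/2}`. -/
noncomputable def gradNorm {V : Type*} [Fintype V] (ω : V → V → ℝ) (μ : V → ℝ)
    (f : V → ℝ) : ℝ :=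
  Real.sqrt (graphInt μ (gradSq ω μ f))

/-- The mean value `f̄ = (1/|V|) ∫_V f dμ`. -/
noncomputable def graphAvg {V : Type*} [Fintype V] (μ : V → ℝ) (f : V → ℝ) : ℝ :=
  (1 / graphVol μ) * graphInt μ f

/-- The `W^{1,2}(V)` norm, `(∫_V (|∇ f|² + f²) dμ)^{1/2}`. -/
noncomputable def sobolevNorm {V : Type*} [Fintype V] (ω : V → V → ℝ) (μ : V → ℝ)
    (f : V → ℝ) : ℝ :=
  Real.sqrt (graphInt μ (fun x => gradSq ω μ f x + f x ^ 2))

/-- `(u, v)` is a solution of the system `(S_λ)`. -/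
def isSolution {V : Type*} [Fintype V] (ω : V → V → ℝ) (μ : V → ℝ)
    (G H : ℝ → ℝ) (N1 N2 : ℕ) (u₀ v₀ : V → ℝ) (lam : ℝ) (u v : V → ℝ) : Prop :=
  ∀ x, graphLap ω μ u x =
      -lam * Real.exp (v₀ x + v x) * H (Real.exp (v₀ x + v x)) *
        primFun G (Real.exp (u₀ x + u x)) + 4 * Real.pi * N1 / graphVol μ ∧
    graphLap ω μ v x =
      -lam * Real.exp (u₀ x + u x) * G (Real.exp (u₀ x + u x)) *
        primFun H (Real.exp (v₀ x + v x)) + 4 * Real.pi * N2 / graphVol μ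

/-- `(u, v)` is a lower solution of the system `(S_λ)`. -/
def isLowerSolution {V : Type*} [Fintype V] (ω : V → V → ℝ) (μ : V → ℝ)
    (G H : ℝ → ℝ) (N1 N2 : ℕ) (u₀ v₀ : V → ℝ) (lam : ℝ) (u v : V → ℝ) : Prop :=
  ∀ x, graphLap ω μ u x ≥
      -lam * Real.exp (v₀ x + v x) * H (Real.exp (v₀ x + v x)) *
        primFun G (Real.exp (u₀ x + u x)) + 4 * Real.pi * N1 / graphVol μ ∧
    graphLap ω μ v x ≥
      -lam * Real.exp (u₀ x + u x) * G (Real.exp (u₀ x + u x)) *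
        primFun H (Real.exp (v₀ x + v x)) + 4 * Real.pi * N2 / graphVol μ

/-- `(uM, vM)` is a maximal solution of `(S_λ)`: it solves the system and any other
solution lies strictly below it. -/
def isMaximalSolution {V : Type*} [Fintype V] (ω : V → V → ℝ) (μ : V → ℝ)
    (G H : ℝ → ℝ) (N1 N2 : ℕ) (u₀ v₀ : V → ℝ) (lam : ℝ) (uM vM : V → ℝ) : Prop :=
  isSolution ω μ G H N1 N2 u₀ v₀ lam uM vM ∧
    ∀ u' v', isSolution ω μ G H N1 N2 u₀ v₀ lam u' v' → (u', v') ≠ (uM, vM) →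
      ∀ x, u' x < uM x ∧ v' x < vM x

section primAux

lemma contOn_integrand {G : ℝ → ℝ} (hGc : ContinuousOn G (Set.Ici 0)) :
    ContinuousOn (fun s : ℝ => 2 * s * G (s ^ 2)) (Set.Ici 0) := by
  refine (continuousOn_const.mul continuousOn_id).mul (hGc.comp (continuous_pow 2).continuousOn ?_)
  intro s _; exact sq_nonneg s

lemma intInt {G : ℝ → ℝ} (hGc : ContinuousOn G (Set.Ici 0)) (a b : ℝ) (ha : 0 ≤ a) (hb : 0 ≤ b) :
    IntervalIntegrable (fun s : ℝ => 2 * s * G (s ^ 2)) MeasureTheory.volume a b := by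
  refine ((contOn_integrand hGc).mono ?_).intervalIntegrable
  intro s hs
  rcases le_total a b with h | h
  · rw [Set.uIcc_of_le h] at hs; exact le_trans ha hs.1
  · rw [Set.uIcc_of_ge h] at hs; exact le_trans hb hs.1

lemma primFun_split {G : ℝ → ℝ} (hGc : ContinuousOn G (Set.Ici 0)) {t t' : ℝ} :
    primFun G t = (∫ s in Real.sqrt t..Real.sqrt t', 2 * s * G (s ^ 2)) + primFun G t' := by
  rw [primFun, primFun,
    intervalIntegral.integral_add_adjacent_intervals
      (intInt hGc _ _ (Real.sqrt_nonneg _) (Real.sqrt_nonneg _))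
      (intInt hGc _ _ (Real.sqrt_nonneg _) zero_le_one)]

lemma integral_two_mul_const (a b c : ℝ) :
    (∫ s in a..b, 2 * s * c) = c * (b ^ 2 - a ^ 2) := by
  have : (fun s : ℝ => 2 * s * c) = fun s : ℝ => (2 * c) * s := by funext s; ring
  rw [this, intervalIntegral.integral_const_mul, integral_id]; ring

lemma primFun_one {G : ℝ → ℝ} : primFun G 1 = 0 := by
  simp [primFun, Real.sqrt_one]

lemma primFun_diff_nonneg {G : ℝ → ℝ} (hGc : ContinuousOn G (Set.Ici 0))
    (hGpos : ∀ s, 0 ≤ s → 0 < G s) {t t' : ℝ} (ht : 0 ≤ t) (htt : t ≤ t') :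
    0 ≤ primFun G t - primFun G t' := by
  rw [primFun_split hGc (t := t) (t' := t'), add_sub_cancel_right]
  refine intervalIntegral.integral_nonneg (Real.sqrt_le_sqrt htt) (fun u hu => ?_)
  have hu0 : 0 ≤ u := le_trans (Real.sqrt_nonneg t) hu.1
  have := (hGpos (u ^ 2) (sq_nonneg u)).le
  positivity

lemma primFun_diff_le {G : ℝ → ℝ} (hGc : ContinuousOn G (Set.Ici 0))
    (hGmono : MonotoneOn G (Set.Ici 0)) {t t' : ℝ} (ht : 0 ≤ t) (htt : t ≤ t') (ht1 : t' ≤ 1) :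
    primFun G t - primFun G t' ≤ G 1 * (t' - t) := by
  rw [primFun_split hGc (t := t) (t' := t'), add_sub_cancel_right]
  have hs : Real.sqrt t ≤ Real.sqrt t' := Real.sqrt_le_sqrt htt
  have h1 : (∫ s in Real.sqrt t..Real.sqrt t', 2 * s * G (s ^ 2))
      ≤ ∫ s in Real.sqrt t..Real.sqrt t', 2 * s * G 1 := by
    refine intervalIntegral.integral_mono_on hs
      (intInt hGc _ _ (Real.sqrt_nonneg _) (Real.sqrt_nonneg _))
      (by apply Continuous.intervalIntegrable; continuity) (fun u hu => ?_)
    have hu0 : 0 ≤ u := le_trans (Real.sqrt_nonneg t) hu.1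
    have hu1 : u ≤ 1 := le_trans hu.2 (by
      rw [show (1:ℝ) = Real.sqrt 1 by rw [Real.sqrt_one]]; exact Real.sqrt_le_sqrt ht1)
    have : G (u ^ 2) ≤ G 1 := hGmono (sq_nonneg u) (Set.mem_Ici.mpr zero_le_one) (by nlinarith)
    nlinarith
  calc _ ≤ _ := h1
    _ = G 1 * (t' - t) := by
        rw [integral_two_mul_const, Real.sq_sqrt (le_trans ht htt), Real.sq_sqrt ht]

lemma primFun_nonneg {G : ℝ → ℝ} (hGc : ContinuousOn G (Set.Ici 0))
    (hGpos : ∀ s, 0 ≤ s → 0 < G s) {t : ℝ} (ht : 0 ≤ t) (ht1 : t ≤ 1) : 0 ≤ primFun G t := by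
  have := primFun_diff_nonneg hGc hGpos ht ht1
  rwa [primFun_one, sub_zero] at this

lemma primFun_le {G : ℝ → ℝ} (hGc : ContinuousOn G (Set.Ici 0))
    (hGmono : MonotoneOn G (Set.Ici 0)) {t : ℝ} (ht : 0 ≤ t) (ht1 : t ≤ 1) :
    primFun G t ≤ G 1 * (1 - t) := by
  have := primFun_diff_le hGc hGmono ht ht1 le_rfl
  rwa [primFun_one, sub_zero] at this

lemma primFun_pos {G : ℝ → ℝ} (hGc : ContinuousOn G (Set.Ici 0))
    (hGmono : MonotoneOn G (Set.Ici 0)) (hGpos : ∀ s, 0 ≤ s → 0 < G s) {t : ℝ}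
    (ht : 0 ≤ t) (ht1 : t < 1) : 0 < primFun G t := by
  have hsplit := primFun_split hGc (t := t) (t' := 1)
  rw [primFun_one, add_zero, Real.sqrt_one] at hsplit
  rw [hsplit]
  have hs1 : Real.sqrt t < 1 := by
    rw [show (1:ℝ) = Real.sqrt 1 by rw [Real.sqrt_one]]
    exact Real.sqrt_lt_sqrt ht ht1
  calc (0:ℝ) < G t * (1 - t) := by
        have := hGpos t ht; nlinarith
    _ = ∫ s in Real.sqrt t..(1:ℝ), 2 * s * G t := by
        rw [integral_two_mul_const, Real.sq_sqrt ht, one_pow]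
    _ ≤ _ := by
        refine intervalIntegral.integral_mono_on hs1.le
          (by apply Continuous.intervalIntegrable; continuity)
          (intInt hGc _ _ (Real.sqrt_nonneg _) zero_le_one) (fun u hu => ?_)
        have hu0 : 0 ≤ u := le_trans (Real.sqrt_nonneg t) hu.1
        have : G t ≤ G (u ^ 2) := by
          refine hGmono ht (sq_nonneg u) ?_
          nlinarith [Real.sq_sqrt ht, hu.1, Real.sqrt_nonneg t]
        nlinarith

lemma primFun_neg {G : ℝ → ℝ} (hGc : ContinuousOn G (Set.Ici 0))
    (hGmono : MonotoneOn G (Set.Ici 0)) (hGpos : ∀ s, 0 ≤ s → 0 < G s) {t : ℝ}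
    (ht1 : 1 < t) : primFun G t < 0 := by
  have hsplit := primFun_split hGc (t := 1) (t' := t)
  rw [primFun_one, Real.sqrt_one] at hsplit
  have h1t : (1:ℝ) < Real.sqrt t := by
    rw [show (1:ℝ) = Real.sqrt 1 by rw [Real.sqrt_one]]
    exact Real.sqrt_lt_sqrt zero_le_one ht1
  have hpos : 0 < ∫ s in (1:ℝ)..Real.sqrt t, 2 * s * G (s ^ 2) := by
    calc (0:ℝ) < G 1 * (t - 1) := by have := hGpos 1 zero_le_one; nlinarith
      _ = ∫ s in (1:ℝ)..Real.sqrt t, 2 * s * G 1 := by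
          rw [integral_two_mul_const, Real.sq_sqrt (by linarith), one_pow]
      _ ≤ _ := by
          refine intervalIntegral.integral_mono_on h1t.le
            (by apply Continuous.intervalIntegrable; continuity)
            (intInt hGc _ _ zero_le_one (Real.sqrt_nonneg _)) (fun u hu => ?_)
          have hu1 : 1 ≤ u := hu.1
          have : G 1 ≤ G (u ^ 2) := hGmono (Set.mem_Ici.mpr zero_le_one) (Set.mem_Ici.mpr (sq_nonneg u)) (by nlinarith)
          nlinarith
  linarith

lemma primFun_lip {G : ℝ → ℝ} (hGc : ContinuousOn G (Set.Ici 0))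
    (hGmono : MonotoneOn G (Set.Ici 0)) (hGpos : ∀ s, 0 ≤ s → 0 < G s) {t t' : ℝ}
    (ht : 0 ≤ t) (ht' : 0 ≤ t') (h1 : t ≤ 1) (h1' : t' ≤ 1) :
    |primFun G t - primFun G t'| ≤ G 1 * |t - t'| := by
  rcases le_total t t' with h | h
  · rw [abs_of_nonneg (primFun_diff_nonneg hGc hGpos ht h), abs_of_nonpos (by linarith)]
    have := primFun_diff_le hGc hGmono ht h h1'
    linarith
  · rw [abs_of_nonpos (by linarith [primFun_diff_nonneg hGc hGpos ht' h]),
      abs_of_nonneg (by linarith)]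
    have := primFun_diff_le hGc hGmono ht' h h1
    linarith

end primAux
section graphAux
variable {V : Type*} [Fintype V] (ω : V → V → ℝ) (μ : V → ℝ)

lemma graphLap_add (f g : V → ℝ) (x : V) :
    graphLap ω μ (f + g) x = graphLap ω μ f x + graphLap ω μ g x := by
  simp only [graphLap, Pi.add_apply]
  rw [← mul_add, ← Finset.sum_add_distrib]
  congr 1
  exact Finset.sum_congr rfl fun y _ => by ring

lemma graphLap_smul (c : ℝ) (f : V → ℝ) (x : V) :
    graphLap ω μ (c • f) x = c * graphLap ω μ f x := by
  simp only [graphLap, Pi.smul_apply, smul_eq_mul]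
  have h : ∑ y, ω x y * (c * f y - c * f x) = c * ∑ y, ω x y * (f y - f x) := by
    rw [Finset.mul_sum]
    exact Finset.sum_congr rfl fun y _ => by ring
  rw [h]; ring

lemma graphLap_neg (f : V → ℝ) (x : V) :
    graphLap ω μ (-f) x = -graphLap ω μ f x := by
  have := graphLap_smul ω μ (-1) f x
  simpa using this

lemma graphLap_sub (f g : V → ℝ) (x : V) :
    graphLap ω μ (f - g) x = graphLap ω μ f x - graphLap ω μ g x := by
  have h := graphLap_add ω μ f (-g) x
  rw [graphLap_neg] at h
  simpa [sub_eq_add_neg] using h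

lemma graphLap_nonpos_at_max (hω : ∀ x y, 0 ≤ ω x y) (hμ : ∀ x, 0 < μ x)
    (w : V → ℝ) (x₀ : V) (hmax : ∀ y, w y ≤ w x₀) :
    graphLap ω μ w x₀ ≤ 0 := by
  have hsum : ∑ y, ω x₀ y * (w y - w x₀) ≤ 0 :=
    Finset.sum_nonpos fun y _ => mul_nonpos_of_nonneg_of_nonpos (hω x₀ y) (by linarith [hmax y])
  have : (0:ℝ) ≤ 1 / μ x₀ := le_of_lt (one_div_pos.mpr (hμ x₀))
  exact mul_nonpos_of_nonneg_of_nonpos this hsum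

/-- Comparison principle: if `Δw - K w ≥ 0` then `w ≤ 0`. -/
lemma comparison [Nonempty V] (hω : ∀ x y, 0 ≤ ω x y) (hμ : ∀ x, 0 < μ x) {K : ℝ} (hK : 0 < K)
    (w : V → ℝ) (h : ∀ x, 0 ≤ graphLap ω μ w x - K * w x) : ∀ x, w x ≤ 0 := by
  obtain ⟨x₀, -, hmax⟩ := Finset.exists_max_image Finset.univ w
    ⟨Classical.arbitrary V, Finset.mem_univ _⟩
  have h1 : graphLap ω μ w x₀ ≤ 0 :=
    graphLap_nonpos_at_max ω μ hω hμ w x₀ fun y => hmax y (Finset.mem_univ y)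
  have h2 : K * w x₀ ≤ 0 := by linarith [h x₀]
  have h3 : w x₀ ≤ 0 := le_of_not_gt fun hpos => absurd h2 (by nlinarith)
  exact fun x => le_trans (hmax x (Finset.mem_univ x)) h3

/-- Solvability of `Δw - K w = f`. -/
lemma lap_solve [Nonempty V] (hω : ∀ x y, 0 ≤ ω x y) (hμ : ∀ x, 0 < μ x) {K : ℝ} (hK : 0 < K)
    (f : V → ℝ) : ∃ w : V → ℝ, ∀ x, graphLap ω μ w x - K * w x = f x := by
  classical
  let L : (V → ℝ) →ₗ[ℝ] (V → ℝ) :=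
    { toFun := fun w x => graphLap ω μ w x - K * w x
      map_add' := fun u v => by
        funext x; simp only [graphLap_add, Pi.add_apply]; ring
      map_smul' := fun c u => by
        funext x; simp only [graphLap_smul, Pi.smul_apply, smul_eq_mul, RingHom.id_apply]; ring }
  have hinj : Function.Injective L := by
    rw [injective_iff_map_eq_zero]
    intro w hw
    have hw' : ∀ x, graphLap ω μ w x - K * w x = 0 := fun x => congrFun hw x
    have h1 : ∀ x, w x ≤ 0 :=
      comparison ω μ hω hμ hK w fun x => ge_of_eq (hw' x)
    have h2 : ∀ x, -w x ≤ 0 := by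
      refine comparison ω μ hω hμ hK (-w) fun x => ?_
      rw [graphLap_neg]
      simp only [Pi.neg_apply]
      have := hw' x; linarith
    funext x
    have := h1 x; have := h2 x; simp; linarith
  have hsurj : Function.Surjective L := (LinearMap.injective_iff_surjective).mp hinj
  obtain ⟨w, hw⟩ := hsurj f
  exact ⟨w, fun x => congrFun hw x⟩

/-- Integration by parts: total integral of the Laplacian vanishes. -/
lemma lap_integral_zero (hω_symm : ∀ x y, ω x y = ω y x) (hμ : ∀ x, 0 < μ x) (f : V → ℝ) :
    ∑ x, μ x * graphLap ω μ f x = 0 := by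
  have h1 : ∀ x, μ x * graphLap ω μ f x = ∑ y, ω x y * (f y - f x) := by
    intro x
    rw [graphLap, ← mul_assoc, mul_one_div, div_self (hμ x).ne', one_mul]
  simp_rw [h1, mul_sub, Finset.sum_sub_distrib]
  have h2 : ∑ x, ∑ y, ω x y * f y = ∑ x : V, ∑ y, ω x y * f x := by
    rw [Finset.sum_comm]
    refine Finset.sum_congr rfl fun a _ => Finset.sum_congr rfl fun b _ => by rw [hω_symm]
  rw [h2, sub_self]

lemma tendsto_graphLap (fn : ℕ → V → ℝ) (f : V → ℝ)
    (h : ∀ y, Filter.Tendsto (fun n => fn n y) Filter.atTop (nhds (f y))) (x : V) :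
    Filter.Tendsto (fun n => graphLap ω μ (fn n) x) Filter.atTop (nhds (graphLap ω μ f x)) := by
  simp only [graphLap]
  exact tendsto_const_nhds.mul
    (tendsto_finset_sum _ fun y _ => tendsto_const_nhds.mul ((h y).sub (h x)))

end graphAux
lemma exp_sub_exp_le {a a' : ℝ} (ha : a ≤ a') (ha0 : a' ≤ 0) :
    Real.exp a' - Real.exp a ≤ a' - a := by
  have hid : Real.exp a = Real.exp a' * Real.exp (a - a') := by
    rw [← Real.exp_add]; ring_nf
  have h1 : a - a' + 1 ≤ Real.exp (a - a') := Real.add_one_le_exp _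
  have h2 : Real.exp a' ≤ 1 := by
    calc Real.exp a' ≤ Real.exp 0 := Real.exp_le_exp.mpr ha0
      _ = 1 := Real.exp_zero
  nlinarith [(Real.exp_pos a').le]

lemma keyIneq {G H : ℝ → ℝ} (hGc : ContinuousOn G (Set.Ici 0))
    (hGmono : MonotoneOn G (Set.Ici 0)) (hGpos : ∀ s, 0 ≤ s → 0 < G s)
    (hHmono : MonotoneOn H (Set.Ici 0)) (hHpos : ∀ s, 0 ≤ s → 0 < H s)
    {lam K : ℝ} (hlam : 0 < lam) (hK : lam * (G 1 * H 1) ≤ K)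
    {a a' b b' : ℝ} (ha : a ≤ a') (ha0 : a' ≤ 0) (hb : b ≤ b') (hb0 : b' ≤ 0) :
    K * (a - a') ≤
      (-lam * Real.exp b * H (Real.exp b) * primFun G (Real.exp a)) -
      (-lam * Real.exp b' * H (Real.exp b') * primFun G (Real.exp a')) := by
  have hea : Real.exp a ≤ Real.exp a' := Real.exp_le_exp.mpr ha
  have hea1 : Real.exp a' ≤ 1 := by
    calc Real.exp a' ≤ Real.exp 0 := Real.exp_le_exp.mpr ha0
      _ = 1 := Real.exp_zero
  have heb : Real.exp b ≤ Real.exp b' := Real.exp_le_exp.mpr hb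
  have heb1 : Real.exp b' ≤ 1 := by
    calc Real.exp b' ≤ Real.exp 0 := Real.exp_le_exp.mpr hb0
      _ = 1 := Real.exp_zero
  have hHb : H (Real.exp b) ≤ H (Real.exp b') :=
    hHmono (Set.mem_Ici.mpr (Real.exp_pos b).le) (Set.mem_Ici.mpr (Real.exp_pos b').le) heb
  have hHb1 : H (Real.exp b') ≤ H 1 :=
    hHmono (Set.mem_Ici.mpr (Real.exp_pos b').le) (Set.mem_Ici.mpr zero_le_one) heb1
  have hHbpos : 0 < H (Real.exp b) := hHpos _ (Real.exp_pos b).le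
  have hHb'pos : 0 < H (Real.exp b') := hHpos _ (Real.exp_pos b').le
  have hG1 : 0 < G 1 := hGpos 1 zero_le_one
  have hH1 : 0 < H 1 := hHpos 1 zero_le_one
  have hP0 : 0 ≤ primFun G (Real.exp a) :=
    primFun_nonneg hGc hGpos (Real.exp_pos a).le (le_trans hea hea1)
  have hPd0 : 0 ≤ primFun G (Real.exp a) - primFun G (Real.exp a') :=
    primFun_diff_nonneg hGc hGpos (Real.exp_pos a).le hea
  have hPd1 : primFun G (Real.exp a) - primFun G (Real.exp a') ≤
      G 1 * (Real.exp a' - Real.exp a) :=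
    primFun_diff_le hGc hGmono (Real.exp_pos a).le hea hea1
  have hexp : Real.exp a' - Real.exp a ≤ a' - a := exp_sub_exp_le ha ha0
  have hX : Real.exp b * H (Real.exp b) ≤ Real.exp b' * H (Real.exp b') :=
    mul_le_mul heb hHb hHbpos.le (Real.exp_pos b').le
  have hX1 : Real.exp b' * H (Real.exp b') ≤ H 1 := by
    calc Real.exp b' * H (Real.exp b') ≤ 1 * H 1 :=
          mul_le_mul heb1 hHb1 hHb'pos.le zero_le_one
      _ = H 1 := one_mul _
  have hX0 : 0 ≤ Real.exp b' * H (Real.exp b') := le_of_lt (mul_pos (Real.exp_pos b') hHb'pos)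
  have c1 : lam * (Real.exp b * H (Real.exp b)) * primFun G (Real.exp a) ≤
      lam * (Real.exp b' * H (Real.exp b')) * primFun G (Real.exp a) := by
    nlinarith [mul_nonneg (mul_nonneg hlam.le (sub_nonneg.mpr hX)) hP0]
  have hPd2 : primFun G (Real.exp a) - primFun G (Real.exp a') ≤ G 1 * (a' - a) := by nlinarith
  have c2 : lam * ((Real.exp b' * H (Real.exp b')) *
        (primFun G (Real.exp a) - primFun G (Real.exp a'))) ≤
      lam * (H 1 * (G 1 * (a' - a))) := by
    have h' : (Real.exp b' * H (Real.exp b')) *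
        (primFun G (Real.exp a) - primFun G (Real.exp a')) ≤ H 1 * (G 1 * (a' - a)) :=
      mul_le_mul hX1 hPd2 hPd0 hH1.le
    exact mul_le_mul_of_nonneg_left h' hlam.le
  have c3 : lam * (H 1 * (G 1 * (a' - a))) ≤ K * (a' - a) := by nlinarith
  nlinarith [c1, c2, c3]
/-- The right-hand side of the first equation of the system. -/
noncomputable def rhsF {V : Type*} [Fintype V] (Gf Hf : ℝ → ℝ) (N1 : ℕ) (μ : V → ℝ)
    (u₀ v₀ : V → ℝ) (lam : ℝ) (u v : V → ℝ) (x : V) : ℝ :=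
  -lam * Real.exp (v₀ x + v x) * Hf (Real.exp (v₀ x + v x)) *
    primFun Gf (Real.exp (u₀ x + u x)) + 4 * Real.pi * N1 / graphVol μ

lemma keyIneqF {V : Type*} [Fintype V] {Gf Hf : ℝ → ℝ}
    (hGc : ContinuousOn Gf (Set.Ici 0)) (hGmono : MonotoneOn Gf (Set.Ici 0))
    (hGpos : ∀ s, 0 ≤ s → 0 < Gf s)
    (hHmono : MonotoneOn Hf (Set.Ici 0)) (hHpos : ∀ s, 0 ≤ s → 0 < Hf s)
    (N1 : ℕ) (μ : V → ℝ) (u₀ v₀ : V → ℝ) {lam K : ℝ} (hlam : 0 < lam)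
    (hK : lam * (Gf 1 * Hf 1) ≤ K) (u u' v v' : V → ℝ)
    (hu : ∀ x, u x ≤ u' x) (hu0 : ∀ x, u₀ x + u' x ≤ 0)
    (hv : ∀ x, v x ≤ v' x) (hv0 : ∀ x, v₀ x + v' x ≤ 0) (x : V) :
    K * (u x - u' x) ≤
      rhsF Gf Hf N1 μ u₀ v₀ lam u v x - rhsF Gf Hf N1 μ u₀ v₀ lam u' v' x := by
  have h := keyIneq hGc hGmono hGpos hHmono hHpos hlam hK
    (a := u₀ x + u x) (a' := u₀ x + u' x) (b := v₀ x + v x) (b' := v₀ x + v' x)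
    (by linarith [hu x]) (hu0 x) (by linarith [hv x]) (hv0 x)
  simp only [rhsF]
  linarith [h]

lemma tendsto_rhsF {V : Type*} [Fintype V] {Gf Hf : ℝ → ℝ}
    (hGc : ContinuousOn Gf (Set.Ici 0)) (hGmono : MonotoneOn Gf (Set.Ici 0))
    (hGpos : ∀ s, 0 ≤ s → 0 < Gf s) (hHc : ContinuousOn Hf (Set.Ici 0))
    (N1 : ℕ) (μ : V → ℝ) (u₀ v₀ : V → ℝ) (lam : ℝ)
    (un vn : ℕ → V → ℝ) (u v : V → ℝ)
    (hu : ∀ y, Filter.Tendsto (fun n => un n y) Filter.atTop (nhds (u y)))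
    (hv : ∀ y, Filter.Tendsto (fun n => vn n y) Filter.atTop (nhds (v y)))
    (x : V) (hbn : ∀ n, u₀ x + un n x ≤ 0) (hbl : u₀ x + u x ≤ 0) :
    Filter.Tendsto (fun n => rhsF Gf Hf N1 μ u₀ v₀ lam (un n) (vn n) x) Filter.atTop
      (nhds (rhsF Gf Hf N1 μ u₀ v₀ lam u v x)) := by
  have hev : Filter.Tendsto (fun n => Real.exp (v₀ x + vn n x)) Filter.atTop
      (nhds (Real.exp (v₀ x + v x))) :=
    (Real.continuous_exp.tendsto _).comp (tendsto_const_nhds.add (hv x))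
  have heu : Filter.Tendsto (fun n => Real.exp (u₀ x + un n x)) Filter.atTop
      (nhds (Real.exp (u₀ x + u x))) :=
    (Real.continuous_exp.tendsto _).comp (tendsto_const_nhds.add (hu x))
  have hH : Filter.Tendsto (fun n => Hf (Real.exp (v₀ x + vn n x))) Filter.atTop
      (nhds (Hf (Real.exp (v₀ x + v x)))) :=
    ((hHc.continuousAt (Ici_mem_nhds (Real.exp_pos _))).tendsto).comp hev
  have hP : Filter.Tendsto (fun n => primFun Gf (Real.exp (u₀ x + un n x))) Filter.atTop
      (nhds (primFun Gf (Real.exp (u₀ x + u x)))) := by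
    rw [tendsto_iff_dist_tendsto_zero]
    have hb : ∀ n, dist (primFun Gf (Real.exp (u₀ x + un n x)))
        (primFun Gf (Real.exp (u₀ x + u x))) ≤
        Gf 1 * dist (Real.exp (u₀ x + un n x)) (Real.exp (u₀ x + u x)) := by
      intro n
      rw [Real.dist_eq, Real.dist_eq]
      refine primFun_lip hGc hGmono hGpos (Real.exp_pos _).le (Real.exp_pos _).le ?_ ?_
      · calc Real.exp (u₀ x + un n x) ≤ Real.exp 0 := Real.exp_le_exp.mpr (hbn n)
          _ = 1 := Real.exp_zero
      · calc Real.exp (u₀ x + u x) ≤ Real.exp 0 := Real.exp_le_exp.mpr hbl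
          _ = 1 := Real.exp_zero
    have hz : Filter.Tendsto (fun n => Gf 1 *
        dist (Real.exp (u₀ x + un n x)) (Real.exp (u₀ x + u x))) Filter.atTop (nhds 0) := by
      have := (tendsto_iff_dist_tendsto_zero.mp heu).const_mul (Gf 1)
      simpa using this
    exact squeeze_zero (fun n => dist_nonneg) hb hz
  have := (((hev.const_mul (-lam)).mul hH).mul hP).add_const (4 * Real.pi * N1 / graphVol μ)
  simpa only [rhsF] using this
/-- Main lemma: a lower solution lying below the trivial upper solution yields a solution. -/
lemma exists_sol {V : Type*} [Fintype V] [Nonempty V]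
    (ω : V → V → ℝ) (μ : V → ℝ) [DecidableEq V]
    (hω_nonneg : ∀ x y, 0 ≤ ω x y) (hμ : ∀ x, 0 < μ x)
    (G H : ℝ → ℝ)
    (hGpos : ∀ s, 0 ≤ s → 0 < G s) (hHpos : ∀ s, 0 ≤ s → 0 < H s)
    (hGmono : MonotoneOn G (Set.Ici 0)) (hHmono : MonotoneOn H (Set.Ici 0))
    (hGc : ContinuousOn G (Set.Ici 0)) (hHc : ContinuousOn H (Set.Ici 0))
    (N1 N2 : ℕ) (p1 : Fin N1 → V) (p2 : Fin N2 → V) (u₀ v₀ : V → ℝ)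
    (hu₀ : ∀ x, graphLap ω μ u₀ x =
      -(4 * Real.pi * N1) / graphVol μ + 4 * Real.pi * ∑ j, diracDelta μ (p1 j) x)
    (hv₀ : ∀ x, graphLap ω μ v₀ x =
      -(4 * Real.pi * N2) / graphVol μ + 4 * Real.pi * ∑ j, diracDelta μ (p2 j) x)
    {lam : ℝ} (hlam : 0 < lam)
    (ul vl : V → ℝ) (hul0 : ∀ x, u₀ x + ul x ≤ 0) (hvl0 : ∀ x, v₀ x + vl x ≤ 0)
    (hlow : isLowerSolution ω μ G H N1 N2 u₀ v₀ lam ul vl) :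
    ∃ u v : V → ℝ, isSolution ω μ G H N1 N2 u₀ v₀ lam u v := by
  classical
  have hG1 : 0 < G 1 := hGpos 1 zero_le_one
  have hH1 : 0 < H 1 := hHpos 1 zero_le_one
  set K : ℝ := lam * (G 1 * H 1) + 1 with hKdef
  have hKpos : 0 < K := by positivity
  have hK1 : lam * (G 1 * H 1) ≤ K := by simp [hKdef]
  have hK2 : lam * (H 1 * G 1) ≤ K := by rw [hKdef]; nlinarith
  -- one step of the iteration
  have hstep : ∀ p : (V → ℝ) × (V → ℝ), ∃ q : (V → ℝ) × (V → ℝ),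
      (∀ x, graphLap ω μ q.1 x - K * q.1 x =
        rhsF G H N1 μ u₀ v₀ lam p.1 p.2 x - K * p.1 x) ∧
      (∀ x, graphLap ω μ q.2 x - K * q.2 x =
        rhsF H G N2 μ v₀ u₀ lam p.2 p.1 x - K * p.2 x) := by
    intro p
    obtain ⟨w1, hw1⟩ := lap_solve ω μ hω_nonneg hμ hKpos
      (fun x => rhsF G H N1 μ u₀ v₀ lam p.1 p.2 x - K * p.1 x)
    obtain ⟨w2, hw2⟩ := lap_solve ω μ hω_nonneg hμ hKpos
      (fun x => rhsF H G N2 μ v₀ u₀ lam p.2 p.1 x - K * p.2 x)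
    exact ⟨⟨w1, w2⟩, hw1, hw2⟩
  -- the iteration sequence
  let S : ℕ → (V → ℝ) × (V → ℝ) := fun n =>
    Nat.rec (⟨fun x => -u₀ x, fun x => -v₀ x⟩) (fun _ p => Classical.choose (hstep p)) n
  have hS0 : S 0 = ⟨fun x => -u₀ x, fun x => -v₀ x⟩ := rfl
  have hSspec : ∀ n,
      (∀ x, graphLap ω μ (S (n+1)).1 x - K * (S (n+1)).1 x =
        rhsF G H N1 μ u₀ v₀ lam (S n).1 (S n).2 x - K * (S n).1 x) ∧
      (∀ x, graphLap ω μ (S (n+1)).2 x - K * (S (n+1)).2 x =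
        rhsF H G N2 μ v₀ u₀ lam (S n).2 (S n).1 x - K * (S n).2 x) :=
    fun n => Classical.choose_spec (hstep (S n))
  clear_value S
  -- base computation: rhsF at (S 0) is the constant
  have hF0u : ∀ x, rhsF G H N1 μ u₀ v₀ lam (S 0).1 (S 0).2 x =
      4 * Real.pi * N1 / graphVol μ := by
    intro x
    simp [rhsF, hS0, primFun_one]
  have hF0v : ∀ x, rhsF H G N2 μ v₀ u₀ lam (S 0).2 (S 0).1 x =
      4 * Real.pi * N2 / graphVol μ := by
    intro x
    simp [rhsF, hS0, primFun_one]
  have hδ1 : ∀ x, (0:ℝ) ≤ ∑ j, diracDelta μ (p1 j) x := by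
    intro x
    refine Finset.sum_nonneg fun j _ => ?_
    unfold diracDelta
    split
    · exact le_of_lt (one_div_pos.mpr (hμ _))
    · exact le_rfl
  have hδ2 : ∀ x, (0:ℝ) ≤ ∑ j, diracDelta μ (p2 j) x := by
    intro x
    refine Finset.sum_nonneg fun j _ => ?_
    unfold diracDelta
    split
    · exact le_of_lt (one_div_pos.mpr (hμ _))
    · exact le_rfl
  have hπ : (0:ℝ) < 4 * Real.pi := by positivity
  -- base case: S 1 ≤ S 0
  have hbase1 : ∀ x, (S 1).1 x ≤ (S 0).1 x := by
    have hcomp : ∀ x, 0 ≤ graphLap ω μ ((S 1).1 - (S 0).1) x - K * ((S 1).1 - (S 0).1) x := by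
      intro x
      rw [graphLap_sub]
      have e1 := (hSspec 0).1 x
      rw [hF0u x] at e1
      norm_num at e1
      have e2 : graphLap ω μ (S 0).1 x = -graphLap ω μ u₀ x := by
        have : (S 0).1 = -u₀ := by rw [hS0]; rfl
        rw [this, graphLap_neg]
      rw [hu₀ x, neg_div] at e2
      have e3 : (S 0).1 x = -u₀ x := by rw [hS0]
      simp only [Pi.sub_apply]
      have hd := hδ1 x
      have key : graphLap ω μ (S 1).1 x - graphLap ω μ (S 0).1 x -
          K * ((S 1).1 x - (S 0).1 x) = 4 * Real.pi * ∑ j, diracDelta μ (p1 j) x := by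
        linear_combination e1 - e2
      rw [key]
      exact mul_nonneg hπ.le hd
    have := comparison ω μ hω_nonneg hμ hKpos _ hcomp
    intro x
    have := this x
    simp only [Pi.sub_apply] at this
    linarith
  have hbase2 : ∀ x, (S 1).2 x ≤ (S 0).2 x := by
    have hcomp : ∀ x, 0 ≤ graphLap ω μ ((S 1).2 - (S 0).2) x - K * ((S 1).2 - (S 0).2) x := by
      intro x
      rw [graphLap_sub]
      have e1 := (hSspec 0).2 x
      rw [hF0v x] at e1
      norm_num at e1
      have e2 : graphLap ω μ (S 0).2 x = -graphLap ω μ v₀ x := by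
        have : (S 0).2 = -v₀ := by rw [hS0]; rfl
        rw [this, graphLap_neg]
      rw [hv₀ x, neg_div] at e2
      have e3 : (S 0).2 x = -v₀ x := by rw [hS0]
      simp only [Pi.sub_apply]
      have hd := hδ2 x
      have key : graphLap ω μ (S 1).2 x - graphLap ω μ (S 0).2 x -
          K * ((S 1).2 x - (S 0).2 x) = 4 * Real.pi * ∑ j, diracDelta μ (p2 j) x := by
        linear_combination e1 - e2
      rw [key]
      exact mul_nonneg hπ.le hd
    have := comparison ω μ hω_nonneg hμ hKpos _ hcomp
    intro x
    have := this x
    simp only [Pi.sub_apply] at this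
    linarith
  -- lower bound stays: if S n is within bounds then ul ≤ S (n+1)
  have hlower : ∀ n, (∀ x, ul x ≤ (S n).1 x) → (∀ x, vl x ≤ (S n).2 x) →
      (∀ x, u₀ x + (S n).1 x ≤ 0) → (∀ x, v₀ x + (S n).2 x ≤ 0) →
      (∀ x, ul x ≤ (S (n+1)).1 x) ∧ (∀ x, vl x ≤ (S (n+1)).2 x) := by
    intro n hu hv hu0 hv0
    constructor
    · have hcomp : ∀ x, 0 ≤ graphLap ω μ (ul - (S (n+1)).1) x -
          K * (ul - (S (n+1)).1) x := by
        intro x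
        rw [graphLap_sub]
        have e1 := (hSspec n).1 x
        have hls : graphLap ω μ ul x ≥ rhsF G H N1 μ u₀ v₀ lam ul vl x := (hlow x).1
        have hkey := keyIneqF hGc hGmono hGpos hHmono hHpos N1 μ u₀ v₀ hlam hK1
          ul (S n).1 vl (S n).2 hu hu0 hv hv0 x
        simp only [Pi.sub_apply]
        linarith
      have := comparison ω μ hω_nonneg hμ hKpos _ hcomp
      intro x
      have := this x
      simp only [Pi.sub_apply] at this
      linarith
    · have hcomp : ∀ x, 0 ≤ graphLap ω μ (vl - (S (n+1)).2) x -
          K * (vl - (S (n+1)).2) x := by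
        intro x
        rw [graphLap_sub]
        have e1 := (hSspec n).2 x
        have hls : graphLap ω μ vl x ≥ rhsF H G N2 μ v₀ u₀ lam vl ul x := (hlow x).2
        have hkey := keyIneqF hHc hHmono hHpos hGmono hGpos N2 μ v₀ u₀ hlam hK2
          vl (S n).2 ul (S n).1 hv hv0 hu hu0 x
        simp only [Pi.sub_apply]
        linarith
      have := comparison ω μ hω_nonneg hμ hKpos _ hcomp
      intro x
      have := this x
      simp only [Pi.sub_apply] at this
      linarith
  -- monotone step: S (n+2) ≤ S (n+1)
  have hmonostep : ∀ n, (∀ x, (S (n+1)).1 x ≤ (S n).1 x) → (∀ x, (S (n+1)).2 x ≤ (S n).2 x) →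
      (∀ x, u₀ x + (S n).1 x ≤ 0) → (∀ x, v₀ x + (S n).2 x ≤ 0) →
      (∀ x, (S (n+2)).1 x ≤ (S (n+1)).1 x) ∧ (∀ x, (S (n+2)).2 x ≤ (S (n+1)).2 x) := by
    intro n hu hv hu0 hv0
    constructor
    · have hcomp : ∀ x, 0 ≤ graphLap ω μ ((S (n+2)).1 - (S (n+1)).1) x -
          K * ((S (n+2)).1 - (S (n+1)).1) x := by
        intro x
        rw [graphLap_sub]
        have e1 := (hSspec (n+1)).1 x
        have e2 := (hSspec n).1 x
        have hkey := keyIneqF hGc hGmono hGpos hHmono hHpos N1 μ u₀ v₀ hlam hK1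
          (S (n+1)).1 (S n).1 (S (n+1)).2 (S n).2 hu hu0 hv hv0 x
        simp only [Pi.sub_apply]
        linarith
      have := comparison ω μ hω_nonneg hμ hKpos _ hcomp
      intro x
      have := this x
      simp only [Pi.sub_apply] at this
      linarith
    · have hcomp : ∀ x, 0 ≤ graphLap ω μ ((S (n+2)).2 - (S (n+1)).2) x -
          K * ((S (n+2)).2 - (S (n+1)).2) x := by
        intro x
        rw [graphLap_sub]
        have e1 := (hSspec (n+1)).2 x
        have e2 := (hSspec n).2 x
        have hkey := keyIneqF hHc hHmono hHpos hGmono hGpos N2 μ v₀ u₀ hlam hK2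
          (S (n+1)).2 (S n).2 (S (n+1)).1 (S n).1 hv hv0 hu hu0 x
        simp only [Pi.sub_apply]
        linarith
      have := comparison ω μ hω_nonneg hμ hKpos _ hcomp
      intro x
      have := this x
      simp only [Pi.sub_apply] at this
      linarith
  -- the full invariant by induction
  have inv : ∀ n, (∀ x, (S (n+1)).1 x ≤ (S n).1 x) ∧ (∀ x, (S (n+1)).2 x ≤ (S n).2 x) ∧
      (∀ x, ul x ≤ (S n).1 x) ∧ (∀ x, vl x ≤ (S n).2 x) ∧
      (∀ x, u₀ x + (S n).1 x ≤ 0) ∧ (∀ x, v₀ x + (S n).2 x ≤ 0) := by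
    intro n
    induction n with
    | zero =>
      refine ⟨hbase1, hbase2, ?_, ?_, ?_, ?_⟩
      · intro x; rw [hS0]; show ul x ≤ -u₀ x; linarith [hul0 x]
      · intro x; rw [hS0]; show vl x ≤ -v₀ x; linarith [hvl0 x]
      · intro x; rw [hS0]; show u₀ x + -u₀ x ≤ 0; simp
      · intro x; rw [hS0]; show v₀ x + -v₀ x ≤ 0; simp
    | succ n ih =>
      obtain ⟨ih1, ih2, ih3, ih4, ih5, ih6⟩ := ih
      obtain ⟨hm1, hm2⟩ := hmonostep n ih1 ih2 ih5 ih6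
      obtain ⟨hl1, hl2⟩ := hlower n ih3 ih4 ih5 ih6
      refine ⟨hm1, hm2, hl1, hl2, ?_, ?_⟩
      · intro x; linarith [ih1 x, ih5 x]
      · intro x; linarith [ih2 x, ih6 x]
  -- convergence
  have hmono1 : ∀ x, Antitone fun n => (S n).1 x :=
    fun x => antitone_nat_of_succ_le fun n => (inv n).1 x
  have hmono2 : ∀ x, Antitone fun n => (S n).2 x :=
    fun x => antitone_nat_of_succ_le fun n => (inv n).2.1 x
  have hbdd1 : ∀ x, BddBelow (Set.range fun n => (S n).1 x) := by
    intro x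
    exact ⟨ul x, by rintro _ ⟨n, rfl⟩; exact (inv n).2.2.1 x⟩
  have hbdd2 : ∀ x, BddBelow (Set.range fun n => (S n).2 x) := by
    intro x
    exact ⟨vl x, by rintro _ ⟨n, rfl⟩; exact (inv n).2.2.2.1 x⟩
  set u : V → ℝ := fun x => ⨅ n, (S n).1 x with hu_def
  set v : V → ℝ := fun x => ⨅ n, (S n).2 x with hv_def
  have htend1 : ∀ x, Filter.Tendsto (fun n => (S n).1 x) Filter.atTop (nhds (u x)) :=
    fun x => tendsto_atTop_ciInf (hmono1 x) (hbdd1 x)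
  have htend2 : ∀ x, Filter.Tendsto (fun n => (S n).2 x) Filter.atTop (nhds (v x)) :=
    fun x => tendsto_atTop_ciInf (hmono2 x) (hbdd2 x)
  have hule : ∀ n x, u x ≤ (S n).1 x := fun n x => ciInf_le (hbdd1 x) n
  have hvle : ∀ n x, v x ≤ (S n).2 x := fun n x => ciInf_le (hbdd2 x) n
  have hub : ∀ x, u₀ x + u x ≤ 0 := fun x => by
    have := hule 0 x
    rw [hS0] at this
    simp at this
    linarith
  have hvb : ∀ x, v₀ x + v x ≤ 0 := fun x => by
    have := hvle 0 x
    rw [hS0] at this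
    simp at this
    linarith
  refine ⟨u, v, fun x => ⟨?_, ?_⟩⟩
  · -- first equation
    have hL : Filter.Tendsto (fun n => graphLap ω μ ((S (n+1)).1) x - K * (S (n+1)).1 x)
        Filter.atTop (nhds (graphLap ω μ u x - K * u x)) := by
      refine Filter.Tendsto.sub ?_ (((htend1 x).comp (Filter.tendsto_add_atTop_nat 1)).const_mul K)
      exact tendsto_graphLap ω μ (fun n => (S (n+1)).1) u
        (fun y => (htend1 y).comp (Filter.tendsto_add_atTop_nat 1)) x
    have hR : Filter.Tendsto (fun n => rhsF G H N1 μ u₀ v₀ lam (S n).1 (S n).2 x - K * (S n).1 x)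
        Filter.atTop (nhds (rhsF G H N1 μ u₀ v₀ lam u v x - K * u x)) := by
      refine Filter.Tendsto.sub ?_ ((htend1 x).const_mul K)
      exact tendsto_rhsF hGc hGmono hGpos hHc N1 μ u₀ v₀ lam
        (fun n => (S n).1) (fun n => (S n).2) u v htend1 htend2 x
        (fun n => (inv n).2.2.2.2.1 x) (hub x)
    have heq : (fun n => graphLap ω μ ((S (n+1)).1) x - K * (S (n+1)).1 x) =
        fun n => rhsF G H N1 μ u₀ v₀ lam (S n).1 (S n).2 x - K * (S n).1 x := by
      funext n; exact (hSspec n).1 x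
    rw [heq] at hL
    have := tendsto_nhds_unique hL hR
    have hgoal : graphLap ω μ u x = rhsF G H N1 μ u₀ v₀ lam u v x := by linarith
    exact hgoal
  · -- second equation
    have hL : Filter.Tendsto (fun n => graphLap ω μ ((S (n+1)).2) x - K * (S (n+1)).2 x)
        Filter.atTop (nhds (graphLap ω μ v x - K * v x)) := by
      refine Filter.Tendsto.sub ?_ (((htend2 x).comp (Filter.tendsto_add_atTop_nat 1)).const_mul K)
      exact tendsto_graphLap ω μ (fun n => (S (n+1)).2) v
        (fun y => (htend2 y).comp (Filter.tendsto_add_atTop_nat 1)) x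
    have hR : Filter.Tendsto (fun n => rhsF H G N2 μ v₀ u₀ lam (S n).2 (S n).1 x - K * (S n).2 x)
        Filter.atTop (nhds (rhsF H G N2 μ v₀ u₀ lam v u x - K * v x)) := by
      refine Filter.Tendsto.sub ?_ ((htend2 x).const_mul K)
      exact tendsto_rhsF hHc hHmono hHpos hGc N2 μ v₀ u₀ lam
        (fun n => (S n).2) (fun n => (S n).1) v u htend2 htend1 x
        (fun n => (inv n).2.2.2.2.2 x) (hvb x)
    have heq : (fun n => graphLap ω μ ((S (n+1)).2) x - K * (S (n+1)).2 x) =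
        fun n => rhsF H G N2 μ v₀ u₀ lam (S n).2 (S n).1 x - K * (S n).2 x := by
      funext n; exact (hSspec n).2 x
    rw [heq] at hL
    have := tendsto_nhds_unique hL hR
    have hgoal : graphLap ω μ v x = rhsF H G N2 μ v₀ u₀ lam v u x := by linarith
    exact hgoal
lemma graphLap_shift {V : Type*} [Fintype V] (ω : V → V → ℝ) (μ : V → ℝ)
    (f : V → ℝ) (c : ℝ) (x : V) :
    graphLap ω μ (fun y => -f y - c) x = -graphLap ω μ f x := by
  simp only [graphLap]
  have h : ∑ y, ω x y * (-f y - c - (-f x - c)) = -∑ y, ω x y * (f y - f x) := by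
    rw [← Finset.sum_neg_distrib]
    exact Finset.sum_congr rfl fun y _ => by ring
  rw [h]; ring

/-- Any solution of the (generic-form) first equation satisfies `u₀ + u ≤ 0`. -/
lemma sol_nonpos_generic {V : Type*} [Fintype V] [Nonempty V] [DecidableEq V]
    (ω : V → V → ℝ) (μ : V → ℝ)
    (hω_nonneg : ∀ x y, 0 ≤ ω x y) (hμ : ∀ x, 0 < μ x)
    {Gf Hf : ℝ → ℝ} (hGc : ContinuousOn Gf (Set.Ici 0))
    (hGmono : MonotoneOn Gf (Set.Ici 0)) (hGpos : ∀ s, 0 ≤ s → 0 < Gf s)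
    (hHpos : ∀ s, 0 ≤ s → 0 < Hf s)
    (N1 : ℕ) (p1 : Fin N1 → V) (u₀ v₀ u v : V → ℝ)
    (hu₀ : ∀ x, graphLap ω μ u₀ x =
      -(4 * Real.pi * N1) / graphVol μ + 4 * Real.pi * ∑ j, diracDelta μ (p1 j) x)
    {lam : ℝ} (hlam : 0 < lam)
    (hequ : ∀ x, graphLap ω μ u x =
      -lam * Real.exp (v₀ x + v x) * Hf (Real.exp (v₀ x + v x)) *
        primFun Gf (Real.exp (u₀ x + u x)) + 4 * Real.pi * N1 / graphVol μ) :
    ∀ x, u₀ x + u x ≤ 0 := by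
  obtain ⟨x₀, -, hmax⟩ := Finset.exists_max_image Finset.univ (fun x => u₀ x + u x)
    ⟨Classical.arbitrary V, Finset.mem_univ _⟩
  have hmax' : ∀ y, u₀ y + u y ≤ u₀ x₀ + u x₀ := fun y => hmax y (Finset.mem_univ y)
  have hx₀ : u₀ x₀ + u x₀ ≤ 0 := by
    by_contra hcon
    push_neg at hcon
    have hlap : graphLap ω μ (u₀ + u) x₀ ≤ 0 :=
      graphLap_nonpos_at_max ω μ hω_nonneg hμ _ x₀ (fun y => hmax' y)
    rw [graphLap_add ω μ u₀ u x₀] at hlap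
    rw [hu₀ x₀, hequ x₀, neg_div] at hlap
    have hP : primFun Gf (Real.exp (u₀ x₀ + u x₀)) < 0 := by
      refine primFun_neg hGc hGmono hGpos ?_
      calc (1:ℝ) = Real.exp 0 := Real.exp_zero.symm
        _ < Real.exp (u₀ x₀ + u x₀) := Real.exp_lt_exp.mpr hcon
    have hX : 0 < Real.exp (v₀ x₀ + v x₀) * Hf (Real.exp (v₀ x₀ + v x₀)) :=
      mul_pos (Real.exp_pos _) (hHpos _ (Real.exp_pos _).le)
    have h1 : 0 < lam * (Real.exp (v₀ x₀ + v x₀) * Hf (Real.exp (v₀ x₀ + v x₀))) *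
        (-(primFun Gf (Real.exp (u₀ x₀ + u x₀)))) :=
      mul_pos (mul_pos hlam hX) (neg_pos.mpr hP)
    have hδ : (0:ℝ) ≤ ∑ j, diracDelta μ (p1 j) x₀ := by
      refine Finset.sum_nonneg fun j _ => ?_
      unfold diracDelta
      split
      · exact le_of_lt (one_div_pos.mpr (hμ _))
      · exact le_rfl
    have hπ : (0:ℝ) < 4 * Real.pi := by positivity
    nlinarith [mul_nonneg hπ.le hδ]
  intro x
  exact le_trans (hmax' x) hx₀

/-- The constant integral computation and the lower bound for `lam`. -/
lemma lam_lower_generic {V : Type*} [Fintype V] [Nonempty V]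
    (ω : V → V → ℝ) (μ : V → ℝ)
    (hω_symm : ∀ x y, ω x y = ω y x) (hμ : ∀ x, 0 < μ x)
    {Gf Hf : ℝ → ℝ} (hGc : ContinuousOn Gf (Set.Ici 0))
    (hGmono : MonotoneOn Gf (Set.Ici 0)) (hGpos : ∀ s, 0 ≤ s → 0 < Gf s)
    (hHmono : MonotoneOn Hf (Set.Ici 0)) (hHpos : ∀ s, 0 ≤ s → 0 < Hf s)
    (N1 : ℕ) (u₀ v₀ u v : V → ℝ) {lam : ℝ} (hlam : 0 < lam)
    (hequ : ∀ x, graphLap ω μ u x =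
      -lam * Real.exp (v₀ x + v x) * Hf (Real.exp (v₀ x + v x)) *
        primFun Gf (Real.exp (u₀ x + u x)) + 4 * Real.pi * N1 / graphVol μ)
    (ha : ∀ x, u₀ x + u x ≤ 0) (hb : ∀ x, v₀ x + v x ≤ 0) :
    4 * Real.pi * N1 ≤ lam * (Gf 1 * Hf 1) * graphVol μ := by
  have hvol : 0 < graphVol μ :=
    Finset.sum_pos (fun x _ => hμ x) Finset.univ_nonempty
  have hG1 : 0 < Gf 1 := hGpos 1 zero_le_one
  have hH1 : 0 < Hf 1 := hHpos 1 zero_le_one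
  set T : V → ℝ := fun x => Real.exp (v₀ x + v x) * Hf (Real.exp (v₀ x + v x)) *
    primFun Gf (Real.exp (u₀ x + u x)) with hT
  have hzero := lap_integral_zero ω μ hω_symm hμ u
  have hsum : ∑ x, μ x * graphLap ω μ u x =
      ∑ x, (-lam * (μ x * T x) + μ x * (4 * Real.pi * N1 / graphVol μ)) := by
    refine Finset.sum_congr rfl fun x _ => ?_
    rw [hequ x]; simp only [hT]; ring
  have hsum2 : ∑ x, (-lam * (μ x * T x) + μ x * (4 * Real.pi * N1 / graphVol μ)) =
      -lam * (∑ x, μ x * T x) + (∑ x, μ x) * (4 * Real.pi * N1 / graphVol μ) := by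
    rw [Finset.sum_add_distrib, ← Finset.mul_sum, ← Finset.sum_mul]
  have hvv : (∑ x, μ x) = graphVol μ := rfl
  have hc : graphVol μ * (4 * Real.pi * N1 / graphVol μ) = 4 * Real.pi * N1 :=
    mul_div_cancel₀ _ hvol.ne'
  have h1 : lam * (∑ x, μ x * T x) = 4 * Real.pi * N1 := by
    rw [hzero, hsum2, hvv, hc] at hsum
    linarith
  have hTb : ∀ x, T x ≤ Gf 1 * Hf 1 := by
    intro x
    have he1 : Real.exp (u₀ x + u x) ≤ 1 := by
      calc Real.exp (u₀ x + u x) ≤ Real.exp 0 := Real.exp_le_exp.mpr (ha x)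
        _ = 1 := Real.exp_zero
    have he2 : Real.exp (v₀ x + v x) ≤ 1 := by
      calc Real.exp (v₀ x + v x) ≤ Real.exp 0 := Real.exp_le_exp.mpr (hb x)
        _ = 1 := Real.exp_zero
    have hHle : Hf (Real.exp (v₀ x + v x)) ≤ Hf 1 :=
      hHmono (Set.mem_Ici.mpr (Real.exp_pos _).le) (Set.mem_Ici.mpr zero_le_one) he2
    have hHp : 0 < Hf (Real.exp (v₀ x + v x)) := hHpos _ (Real.exp_pos _).le
    have hX : Real.exp (v₀ x + v x) * Hf (Real.exp (v₀ x + v x)) ≤ Hf 1 := by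
      calc Real.exp (v₀ x + v x) * Hf (Real.exp (v₀ x + v x)) ≤ 1 * Hf 1 :=
            mul_le_mul he2 hHle hHp.le zero_le_one
        _ = Hf 1 := one_mul _
    have hX0 : 0 ≤ Real.exp (v₀ x + v x) * Hf (Real.exp (v₀ x + v x)) :=
      le_of_lt (mul_pos (Real.exp_pos _) hHp)
    have hP0 : 0 ≤ primFun Gf (Real.exp (u₀ x + u x)) :=
      primFun_nonneg hGc hGpos (Real.exp_pos _).le he1
    have hPle : primFun Gf (Real.exp (u₀ x + u x)) ≤ Gf 1 := by
      have := primFun_le hGc hGmono (Real.exp_pos (u₀ x + u x)).le he1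
      nlinarith [Real.exp_pos (u₀ x + u x)]
    calc T x ≤ Hf 1 * Gf 1 := mul_le_mul hX hPle hP0 hH1.le
      _ = Gf 1 * Hf 1 := mul_comm _ _
  have hTsum : ∑ x, μ x * T x ≤ (Gf 1 * Hf 1) * graphVol μ := by
    calc ∑ x, μ x * T x ≤ ∑ x, μ x * (Gf 1 * Hf 1) :=
          Finset.sum_le_sum fun x _ => mul_le_mul_of_nonneg_left (hTb x) (hμ x).le
      _ = (Gf 1 * Hf 1) * graphVol μ := by
          rw [← Finset.sum_mul, graphVol]; ring
  calc 4 * Real.pi * N1 = lam * (∑ x, μ x * T x) := h1.symm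
    _ ≤ lam * ((Gf 1 * Hf 1) * graphVol μ) := mul_le_mul_of_nonneg_left hTsum hlam.le
    _ = lam * (Gf 1 * Hf 1) * graphVol μ := by ring
theorem stmt_7
    {V : Type*} [Fintype V] [DecidableEq V]
    (hV : 1 < Fintype.card V)
    (ω : V → V → ℝ) (μ : V → ℝ)
    (hω_nonneg : ∀ x y, 0 ≤ ω x y)
    (hω_symm : ∀ x y, ω x y = ω y x)
    (hω_diag : ∀ x, ω x x = 0)
    (hconn : ∀ x y : V, x ≠ y → ∃ (n : ℕ) (c : Fin (n + 1) → V),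
      c 0 = x ∧ c (Fin.last n) = y ∧ ∀ i : Fin n, 0 < ω (c i.castSucc) (c i.succ))
    (hμ : ∀ x, 0 < μ x)
    (G H : ℝ → ℝ)
    (hGpos : ∀ s, 0 ≤ s → 0 < G s) (hHpos : ∀ s, 0 ≤ s → 0 < H s)
    (hGmono : StrictMonoOn G (Set.Ici 0)) (hHmono : StrictMonoOn H (Set.Ici 0))
    (hGsmooth : ContDiffOn ℝ (⊤ : ℕ∞) G (Set.Ici 0)) (hHsmooth : ContDiffOn ℝ (⊤ : ℕ∞) H (Set.Ici 0))
    (N1 N2 : ℕ) (hN1 : 0 < N1) (hN2 : 0 < N2)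
    (p1 : Fin N1 → V) (p2 : Fin N2 → V)
    (u₀ v₀ : V → ℝ)
    (hu₀ : ∀ x, graphLap ω μ u₀ x =
      -(4 * Real.pi * N1) / graphVol μ + 4 * Real.pi * ∑ j, diracDelta μ (p1 j) x)
    (hv₀ : ∀ x, graphLap ω μ v₀ x =
      -(4 * Real.pi * N2) / graphVol μ + 4 * Real.pi * ∑ j, diracDelta μ (p2 j) x)
 :
    {lam : ℝ | 0 < lam ∧ ∃ u v : V → ℝ, isSolution ω μ G H N1 N2 u₀ v₀ lam u v}.Nonempty ∧
    0 < 4 * Real.pi * max (N1 : ℝ) N2 / (G 1 * H 1 * graphVol μ) ∧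
    4 * Real.pi * max (N1 : ℝ) N2 / (G 1 * H 1 * graphVol μ) ≤ sInf {lam : ℝ | 0 < lam ∧ ∃ u v : V → ℝ, isSolution ω μ G H N1 N2 u₀ v₀ lam u v} ∧
    (∀ lam : ℝ, sInf {lam' : ℝ | 0 < lam' ∧ ∃ u v : V → ℝ, isSolution ω μ G H N1 N2 u₀ v₀ lam' u v} < lam → lam ∈ {lam' : ℝ | 0 < lam' ∧ ∃ u v : V → ℝ, isSolution ω μ G H N1 N2 u₀ v₀ lam' u v}) ∧
    (∀ lam : ℝ, lam < sInf {lam' : ℝ | 0 < lam' ∧ ∃ u v : V → ℝ, isSolution ω μ G H N1 N2 u₀ v₀ lam' u v} → lam ∉ {lam' : ℝ | 0 < lam' ∧ ∃ u v : V → ℝ, isSolution ω μ G H N1 N2 u₀ v₀ lam' u v}) := by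
  classical
  have hNe : Nonempty V := Fintype.card_pos_iff.mp (by omega)
  have hGc : ContinuousOn G (Set.Ici 0) := hGsmooth.continuousOn
  have hHc : ContinuousOn H (Set.Ici 0) := hHsmooth.continuousOn
  have hGm : MonotoneOn G (Set.Ici 0) := hGmono.monotoneOn
  have hHm : MonotoneOn H (Set.Ici 0) := hHmono.monotoneOn
  have hG1 : 0 < G 1 := hGpos 1 zero_le_one
  have hH1 : 0 < H 1 := hHpos 1 zero_le_one
  have hvol : 0 < graphVol μ := Finset.sum_pos (fun x _ => hμ x) Finset.univ_nonempty
  set Λ := {lam : ℝ | 0 < lam ∧ ∃ u v : V → ℝ, isSolution ω μ G H N1 N2 u₀ v₀ lam u v} with hΛ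
  -- the explicit lower solution for a large lam₀
  obtain ⟨ul, hul⟩ : ∃ f : V → ℝ, f = fun x => -u₀ x - 1 := ⟨_, rfl⟩
  obtain ⟨vl, hvl⟩ : ∃ f : V → ℝ, f = fun x => -v₀ x - 1 := ⟨_, rfl⟩
  have hashift : ∀ x, u₀ x + ul x = -1 := fun x => by simp only [hul]; ring
  have hbshift : ∀ x, v₀ x + vl x = -1 := fun x => by simp only [hvl]; ring
  have hulLap : ∀ x, graphLap ω μ ul x = -graphLap ω μ u₀ x := fun x => by
    rw [hul]; exact graphLap_shift ω μ u₀ 1 x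
  have hvlLap : ∀ x, graphLap ω μ vl x = -graphLap ω μ v₀ x := fun x => by
    rw [hvl]; exact graphLap_shift ω μ v₀ 1 x
  have hexp0 : (0:ℝ) < Real.exp (-1) := Real.exp_pos _
  have hexp1 : Real.exp (-1:ℝ) < 1 := by
    calc Real.exp (-1:ℝ) < Real.exp 0 := Real.exp_lt_exp.mpr (by norm_num)
      _ = 1 := Real.exp_zero
  have hP1 : 0 < primFun G (Real.exp (-1)) := primFun_pos hGc hGm hGpos hexp0.le hexp1
  have hP2 : 0 < primFun H (Real.exp (-1)) := primFun_pos hHc hHm hHpos hexp0.le hexp1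
  have hC1 : 0 < Real.exp (-1) * H (Real.exp (-1)) * primFun G (Real.exp (-1)) :=
    mul_pos (mul_pos hexp0 (hHpos _ hexp0.le)) hP1
  have hC2 : 0 < Real.exp (-1) * G (Real.exp (-1)) * primFun H (Real.exp (-1)) :=
    mul_pos (mul_pos hexp0 (hGpos _ hexp0.le)) hP2
  obtain ⟨M1, hM1def⟩ : ∃ m : ℝ, m = 4 * Real.pi * ∑ j, (1 / μ (p1 j)) := ⟨_, rfl⟩
  obtain ⟨M2, hM2def⟩ : ∃ m : ℝ, m = 4 * Real.pi * ∑ j, (1 / μ (p2 j)) := ⟨_, rfl⟩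
  have hM1 : 0 ≤ M1 := by
    rw [hM1def]
    exact mul_nonneg (by positivity)
      (Finset.sum_nonneg fun j _ => (one_div_pos.mpr (hμ _)).le)
  have hM2 : 0 ≤ M2 := by
    rw [hM2def]
    exact mul_nonneg (by positivity)
      (Finset.sum_nonneg fun j _ => (one_div_pos.mpr (hμ _)).le)
  obtain ⟨lam₀, hlam₀def⟩ : ∃ l : ℝ, l =
    max (M1 / (Real.exp (-1) * H (Real.exp (-1)) * primFun G (Real.exp (-1))))
      (M2 / (Real.exp (-1) * G (Real.exp (-1)) * primFun H (Real.exp (-1)))) + 1 := ⟨_, rfl⟩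
  have hq1 : M1 / (Real.exp (-1) * H (Real.exp (-1)) * primFun G (Real.exp (-1))) ≤
      lam₀ - 1 := by rw [hlam₀def]; simp
  have hq2 : M2 / (Real.exp (-1) * G (Real.exp (-1)) * primFun H (Real.exp (-1))) ≤
      lam₀ - 1 := by rw [hlam₀def]; simp
  have hlam₀ : 0 < lam₀ := by
    have h0 := div_nonneg hM1 hC1.le
    linarith
  have hkey1 : M1 ≤ lam₀ * (Real.exp (-1) * H (Real.exp (-1)) * primFun G (Real.exp (-1))) := by
    have h' : M1 / (Real.exp (-1) * H (Real.exp (-1)) * primFun G (Real.exp (-1))) ≤ lam₀ :=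
      le_trans hq1 (by linarith)
    have := (div_le_iff₀ hC1).mp h'
    linarith
  have hkey2 : M2 ≤ lam₀ * (Real.exp (-1) * G (Real.exp (-1)) * primFun H (Real.exp (-1))) := by
    have h' : M2 / (Real.exp (-1) * G (Real.exp (-1)) * primFun H (Real.exp (-1))) ≤ lam₀ :=
      le_trans hq2 (by linarith)
    have := (div_le_iff₀ hC2).mp h'
    linarith
  have hδb1 : ∀ x, ∑ j, diracDelta μ (p1 j) x ≤ ∑ j, (1 / μ (p1 j)) := by
    intro x
    refine Finset.sum_le_sum fun j _ => ?_
    unfold diracDelta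
    split
    · exact le_rfl
    · exact (one_div_pos.mpr (hμ _)).le
  have hδb2 : ∀ x, ∑ j, diracDelta μ (p2 j) x ≤ ∑ j, (1 / μ (p2 j)) := by
    intro x
    refine Finset.sum_le_sum fun j _ => ?_
    unfold diracDelta
    split
    · exact le_rfl
    · exact (one_div_pos.mpr (hμ _)).le
  have hπ : (0:ℝ) < 4 * Real.pi := by positivity
  have hlow₀ : isLowerSolution ω μ G H N1 N2 u₀ v₀ lam₀ ul vl := by
    intro x
    constructor
    · rw [hulLap x, hu₀ x, neg_div, hashift x, hbshift x]
      have hd := hδb1 x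
      have hd' : 4 * Real.pi * ∑ j, diracDelta μ (p1 j) x ≤ M1 := by
        rw [hM1def]
        exact mul_le_mul_of_nonneg_left hd hπ.le
      linarith only [hkey1, hd']
    · rw [hvlLap x, hv₀ x, neg_div, hashift x, hbshift x]
      have hd := hδb2 x
      have hd' : 4 * Real.pi * ∑ j, diracDelta μ (p2 j) x ≤ M2 := by
        rw [hM2def]
        exact mul_le_mul_of_nonneg_left hd hπ.le
      linarith only [hkey2, hd']
  have hmem₀ : lam₀ ∈ Λ := by
    refine ⟨hlam₀, ?_⟩
    exact exists_sol ω μ hω_nonneg hμ G H hGpos hHpos hGm hHm hGc hHc N1 N2 p1 p2 u₀ v₀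
      hu₀ hv₀ hlam₀ ul vl (fun x => by rw [hashift x]; norm_num)
      (fun x => by rw [hbshift x]; norm_num) hlow₀
  have hne : Λ.Nonempty := ⟨lam₀, hmem₀⟩
  have hbdd : BddBelow Λ := ⟨0, fun b hb => hb.1.le⟩
  have hlb : ∀ lam ∈ Λ, 4 * Real.pi * max (N1:ℝ) N2 / (G 1 * H 1 * graphVol μ) ≤ lam := by
    rintro lam ⟨hpos, u, v, hsol⟩
    have hequ : ∀ x, graphLap ω μ u x =
        -lam * Real.exp (v₀ x + v x) * H (Real.exp (v₀ x + v x)) *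
          primFun G (Real.exp (u₀ x + u x)) + 4 * Real.pi * N1 / graphVol μ :=
      fun x => (hsol x).1
    have heqv : ∀ x, graphLap ω μ v x =
        -lam * Real.exp (u₀ x + u x) * G (Real.exp (u₀ x + u x)) *
          primFun H (Real.exp (v₀ x + v x)) + 4 * Real.pi * N2 / graphVol μ :=
      fun x => (hsol x).2
    have ha := sol_nonpos_generic ω μ hω_nonneg hμ hGc hGm hGpos hHpos N1 p1 u₀ v₀ u v
      hu₀ hpos hequ
    have hb := sol_nonpos_generic ω μ hω_nonneg hμ hHc hHm hHpos hGpos N2 p2 v₀ u₀ v u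
      hv₀ hpos heqv
    have h1 := lam_lower_generic ω μ hω_symm hμ hGc hGm hGpos hHm hHpos N1 u₀ v₀ u v
      hpos hequ ha hb
    have h2 := lam_lower_generic ω μ hω_symm hμ hHc hHm hHpos hGm hGpos N2 v₀ u₀ v u
      hpos heqv hb ha
    rw [div_le_iff₀ (mul_pos (mul_pos hG1 hH1) hvol)]
    rcases max_cases (N1:ℝ) (N2:ℝ) with ⟨hm, -⟩ | ⟨hm, -⟩ <;> rw [hm] <;> linarith only [h1, h2]
  refine ⟨hne, ?_, le_csInf hne hlb, ?_, ?_⟩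
  · refine div_pos (mul_pos hπ ?_) (mul_pos (mul_pos hG1 hH1) hvol)
    exact lt_max_iff.mpr (Or.inl (by exact_mod_cast hN1))
  · intro lam hlt
    obtain ⟨lam'', hmem'', hlt''⟩ := exists_lt_of_csInf_lt hne hlt
    obtain ⟨hpos'', u'', v'', hsol''⟩ := hmem''
    have hlam : 0 < lam := lt_trans hpos'' hlt''
    have hequ : ∀ x, graphLap ω μ u'' x =
        -lam'' * Real.exp (v₀ x + v'' x) * H (Real.exp (v₀ x + v'' x)) *
          primFun G (Real.exp (u₀ x + u'' x)) + 4 * Real.pi * N1 / graphVol μ :=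
      fun x => (hsol'' x).1
    have heqv : ∀ x, graphLap ω μ v'' x =
        -lam'' * Real.exp (u₀ x + u'' x) * G (Real.exp (u₀ x + u'' x)) *
          primFun H (Real.exp (v₀ x + v'' x)) + 4 * Real.pi * N2 / graphVol μ :=
      fun x => (hsol'' x).2
    have ha := sol_nonpos_generic ω μ hω_nonneg hμ hGc hGm hGpos hHpos N1 p1 u₀ v₀ u'' v''
      hu₀ hpos'' hequ
    have hb := sol_nonpos_generic ω μ hω_nonneg hμ hHc hHm hHpos hGpos N2 p2 v₀ u₀ v'' u''
      hv₀ hpos'' heqv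
    have hlow : isLowerSolution ω μ G H N1 N2 u₀ v₀ lam u'' v'' := by
      intro x
      have he1 : Real.exp (u₀ x + u'' x) ≤ 1 := by
        calc Real.exp (u₀ x + u'' x) ≤ Real.exp 0 := Real.exp_le_exp.mpr (ha x)
          _ = 1 := Real.exp_zero
      have he2 : Real.exp (v₀ x + v'' x) ≤ 1 := by
        calc Real.exp (v₀ x + v'' x) ≤ Real.exp 0 := Real.exp_le_exp.mpr (hb x)
          _ = 1 := Real.exp_zero
      constructor
      · have hT : 0 ≤ Real.exp (v₀ x + v'' x) * H (Real.exp (v₀ x + v'' x)) *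
            primFun G (Real.exp (u₀ x + u'' x)) :=
          mul_nonneg (mul_nonneg (Real.exp_pos _).le (hHpos _ (Real.exp_pos _).le).le)
            (primFun_nonneg hGc hGpos (Real.exp_pos _).le he1)
        have heq := hequ x
        linarith only [heq, mul_nonneg (sub_nonneg.mpr hlt''.le) hT]
      · have hT : 0 ≤ Real.exp (u₀ x + u'' x) * G (Real.exp (u₀ x + u'' x)) *
            primFun H (Real.exp (v₀ x + v'' x)) :=
          mul_nonneg (mul_nonneg (Real.exp_pos _).le (hGpos _ (Real.exp_pos _).le).le)
            (primFun_nonneg hHc hHpos (Real.exp_pos _).le he2)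
        have heq := heqv x
        linarith only [heq, mul_nonneg (sub_nonneg.mpr hlt''.le) hT]
    exact ⟨hlam, exists_sol ω μ hω_nonneg hμ G H hGpos hHpos hGm hHm hGc hHc N1 N2 p1 p2
      u₀ v₀ hu₀ hv₀ hlam u'' v'' ha hb hlow⟩
  · intro lam hlt hmem
    exact absurd (csInf_le hbdd hmem) (not_le.mpr hlt)
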